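/- Let n < m and let ũ : ℝ^{n−1} × ℝ → ℝ be any smooth function with ∂ũ/∂z(y,z) > 0 for all (y,z). Then the regularized map Z̃ : ℝⁿ → ℝᵐ defined by Z̃(y,z) = (y, z³ + 3(|y|² − 1)z, ũ(y,z), 0, …, 0) is an injective immersion: Z̃ is injective on ℝⁿ and its derivative at every point is an injective linear map ℝⁿ → ℝᵐ. -/

import Mathlib

/-- The regularized wrinkled-embedding model: the unfolding function of
`Z(n,m)` is replaced by a function `ũ`,
`Z̃(y,z) = (y, z³ + 3(|y|² − 1)z, ũ(y,z), 0, …, 0)`. -/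
noncomputable def Zreg (k l : ℕ) (ut : EuclideanSpace ℝ (Fin k) × ℝ → ℝ)
    (p : EuclideanSpace ℝ (Fin k) × ℝ) :
    EuclideanSpace ℝ (Fin k) × ℝ × ℝ × EuclideanSpace ℝ (Fin l) :=
  (p.1, p.2^3 + 3*(‖p.1‖^2 - 1)*p.2, ut p, 0)

/-!
The cubic coordinate plays no role: the coordinates `y` and `ũ(y,z)` of `Z̃` alone already
form an injective immersion `(y,z) ↦ (y, ũ(y,z))`, since `ũ` is strictly increasing in `z`
and `∂ũ/∂z ≠ 0` makes the differential `(v,w) ↦ (v, Dũ(v,w))` injective.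
-/

open Function

theorem injective_prodMk_fst_of_injective_slices {α β γ : Type*} (g : α × β → γ)
    (hg : ∀ a, Injective fun b => g (a, b)) : Injective fun p : α × β => (p.1, g p) := by
  rintro ⟨a, b⟩ ⟨a', b'⟩ h
  obtain ⟨rfl, hb⟩ := Prod.mk.inj h
  rw [hg a hb]

section ProdScalar

variable {𝕜 E : Type*} [NontriviallyNormedField 𝕜] [NormedAddCommGroup E] [NormedSpace 𝕜 E]

theorem ContinuousLinearMap.injective_fst_prod_of_apply_ne_zero (L : E × 𝕜 →L[𝕜] 𝕜)
    (hL : L (0, 1) ≠ 0) : Injective ((ContinuousLinearMap.fst 𝕜 E 𝕜).prod L) := by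
  refine (injective_iff_map_eq_zero _).2 fun ⟨v, t⟩ hv => ?_
  obtain ⟨rfl, hLv⟩ := Prod.mk.inj hv
  have hsmul : ((0 : E), t) = t • ((0 : E), (1 : 𝕜)) := by simp
  rw [hsmul, map_smul, smul_eq_mul, mul_eq_zero] at hLv
  simp [hLv.resolve_right hL]

theorem DifferentiableAt.hasDerivAt_slice {u : E × 𝕜 → 𝕜} {y : E} {z : 𝕜}
    (hu : DifferentiableAt 𝕜 u (y, z)) :
    HasDerivAt (fun t => u (y, t)) (fderiv 𝕜 u (y, z) (0, 1)) z :=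
  hu.hasFDerivAt.comp_hasDerivAt z ((hasDerivAt_const z y).prodMk (hasDerivAt_id z))

end ProdScalar

section Zreg

variable {k l : ℕ} {ut : EuclideanSpace ℝ (Fin k) × ℝ → ℝ}

noncomputable def Zreg.proj (k l : ℕ) :
    EuclideanSpace ℝ (Fin k) × ℝ × ℝ × EuclideanSpace ℝ (Fin l) →L[ℝ]
      EuclideanSpace ℝ (Fin k) × ℝ :=
  (ContinuousLinearMap.fst ℝ _ _).prod
    ((ContinuousLinearMap.fst ℝ _ _).comp
      ((ContinuousLinearMap.snd ℝ _ _).comp (ContinuousLinearMap.snd ℝ _ _)))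

theorem Zreg.proj_comp : Zreg.proj k l ∘ Zreg k l ut = fun p => (p.1, ut p) := rfl

theorem Zreg_injective (hut : ∀ y, Injective fun z => ut (y, z)) :
    Injective (Zreg k l ut) := by
  refine Injective.of_comp (f := Zreg.proj k l) ?_
  rw [Zreg.proj_comp]
  exact injective_prodMk_fst_of_injective_slices ut hut

theorem differentiableAt_Zreg {p : EuclideanSpace ℝ (Fin k) × ℝ}
    (hut : DifferentiableAt ℝ ut p) : DifferentiableAt ℝ (Zreg k l ut) p := by
  have hnorm : DifferentiableAt ℝ (fun q : EuclideanSpace ℝ (Fin k) × ℝ => ‖q.1‖ ^ 2) p :=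
    differentiableAt_fst.norm_sq ℝ
  unfold Zreg
  fun_prop

theorem injective_fderiv_Zreg {p : EuclideanSpace ℝ (Fin k) × ℝ}
    (hut : DifferentiableAt ℝ ut p) (hslope : fderiv ℝ ut p (0, 1) ≠ 0) :
    Injective (fderiv ℝ (Zreg k l ut) p) := by
  refine Injective.of_comp (f := Zreg.proj k l) ?_
  have hcomp : (Zreg.proj k l).comp (fderiv ℝ (Zreg k l ut) p)
      = (ContinuousLinearMap.fst ℝ _ ℝ).prod (fderiv ℝ ut p) := by
    have hproj := (Zreg.proj k l).hasFDerivAt.comp p (differentiableAt_Zreg hut).hasFDerivAt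
    rw [Zreg.proj_comp] at hproj
    exact hproj.unique (hasFDerivAt_fst.prodMk hut.hasFDerivAt)
  rw [← ContinuousLinearMap.coe_comp, hcomp]
  exact ContinuousLinearMap.injective_fst_prod_of_apply_ne_zero _ hslope

end Zreg

theorem Zreg_injective_immersion_general (n m : ℕ)
    (ut : EuclideanSpace ℝ (Fin (n - 1)) × ℝ → ℝ)
    (hut : ContDiff ℝ (⊤ : ℕ∞) ut)
    (hpos : ∀ p : EuclideanSpace ℝ (Fin (n - 1)) × ℝ,
      0 < deriv (fun z => ut (p.1, z)) p.2) :
    Function.Injective (Zreg (n - 1) (m - n - 1) ut) ∧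
    ∀ p : EuclideanSpace ℝ (Fin (n - 1)) × ℝ,
      Function.Injective ⇑(fderiv ℝ (Zreg (n - 1) (m - n - 1) ut) p) := by
  have hdiff : Differentiable ℝ ut := hut.differentiable (by simp)
  refine ⟨Zreg_injective fun y => (strictMono_of_deriv_pos fun z => hpos (y, z)).injective,
    fun p => injective_fderiv_Zreg (hdiff p) ?_⟩
  rw [← ((hdiff p).hasDerivAt_slice).deriv]
  exact (hpos p).ne'

/-- If `ũ` is smooth with everywhere positive `z`-derivative, then the
regularized model `Z̃(y,z) = (y, z³ + 3(|y|²−1)z, ũ(y,z), 0, …, 0)` is an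
injective immersion: it is injective and its derivative is everywhere an
injective linear map. -/
theorem Zreg_injective_immersion (n m : ℕ) (hn : 1 ≤ n) (hnm : n < m)
    (ut : EuclideanSpace ℝ (Fin (n - 1)) × ℝ → ℝ)
    (hut : ContDiff ℝ (⊤ : ℕ∞) ut)
    (hpos : ∀ p : EuclideanSpace ℝ (Fin (n - 1)) × ℝ,
      0 < deriv (fun z => ut (p.1, z)) p.2) :
    Function.Injective (Zreg (n - 1) (m - n - 1) ut) ∧
    ∀ p : EuclideanSpace ℝ (Fin (n - 1)) × ℝ,
      Function.Injective ⇑(fderiv ℝ (Zreg (n - 1) (m - n - 1) ut) p) :=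
  Zreg_injective_immersion_general n m ut hut hpos
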